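/- Let $R$ be a commutative ring, $Z$ its set of zero-divisors, and suppose that for every ideal $I \subseteq Z$ and every regular element $b \in R$, the quotient $(b)/((b) \cap I)$ is infinite. Let $I_1, \dots, I_n \subseteq Z$ be ideals contained in $Z$, $b' \in R$ regular, and $a', r_1, \dots, r_n \in R$. Then $a' + (b') \not\subseteq \bigcup_{i=1}^n (r_i + I_i)$. -/

import Mathlib

open Pointwise

namespace AddSubgroup

variable {G : Type*} [AddGroup G]

theorem mem_vadd_of_add_mem_vadd (H : AddSubgroup G) {a r x y : G}
    (hx : a + x ∈ r +ᵥ (H : Set G)) (hy : a + y ∈ r +ᵥ (H : Set G)) :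
    x ∈ y +ᵥ (H : Set G) := by
  rw [mem_leftAddCoset_iff] at hx hy ⊢
  simpa [add_assoc] using H.add_mem (H.neg_mem hy) hx

/-- Neumann's lemma relative to a subgroup `B`: choosing in each covering coset a point of
`a +ᵥ B`, the cover restricts to a cover of `B` by cosets of the `H i ⊓ B`. -/
theorem exists_finiteIndex_addSubgroupOf_of_vadd_subset_iUnion {ι : Type*} [Finite ι]
    {B : AddSubgroup G} {H : ι → AddSubgroup G} {a : G} {r : ι → G}
    (hcover : a +ᵥ (B : Set G) ⊆ ⋃ i, r i +ᵥ (H i : Set G)) :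
    ∃ i, ((H i).addSubgroupOf B).FiniteIndex := by
  have := Fintype.ofFinite ι
  have hbase : ∀ i, ∃ y : B, ∀ x : B, a + x ∈ r i +ᵥ (H i : Set G) →
      a + y ∈ r i +ᵥ (H i : Set G) := by
    intro i
    by_cases hmeet : ∃ x : B, a + x ∈ r i +ᵥ (H i : Set G)
    · obtain ⟨x, hx⟩ := hmeet
      exact ⟨x, fun _ _ ↦ hx⟩
    · exact ⟨0, fun x hx ↦ (hmeet ⟨x, hx⟩).elim⟩
  choose g hg using hbase
  have hcoversB : ⋃ i ∈ Finset.univ, g i +ᵥ ((H i).addSubgroupOf B : Set B) = Set.univ := by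
    refine Set.eq_univ_of_forall fun x ↦ ?_
    obtain ⟨i, hi⟩ := Set.mem_iUnion.mp (hcover ⟨x, x.2, rfl⟩)
    refine Set.mem_iUnion₂.mpr ⟨i, Finset.mem_univ i, ?_⟩
    have hx := (H i).mem_vadd_of_add_mem_vadd hi (hg i x hi)
    rw [mem_leftAddCoset_iff] at hx ⊢
    simpa [mem_addSubgroupOf] using hx
  obtain ⟨i, -, hi⟩ := exists_finiteIndex_of_leftCoset_cover hcoversB
  exact ⟨i, hi⟩

end AddSubgroup

theorem regular_coset_not_covered {R : Type*} [CommRing R]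
    (hyp : ∀ I : Ideal R, (∀ x ∈ I, x ∉ nonZeroDivisors R) →
      ∀ b ∈ nonZeroDivisors R,
        Infinite ((Ideal.span {b} : Ideal R).toAddSubgroup ⧸
          (((Ideal.span {b} : Ideal R).toAddSubgroup ⊓ I.toAddSubgroup).addSubgroupOf
            (Ideal.span {b} : Ideal R).toAddSubgroup)))
    (n : ℕ) (I : Fin n → Ideal R) (hI : ∀ i, ∀ x ∈ I i, x ∉ nonZeroDivisors R)
    (b' : R) (hb' : b' ∈ nonZeroDivisors R) (a' : R) (r : Fin n → R) :
    ¬ (a' +ᵥ ((Ideal.span {b'} : Ideal R) : Set R)) ⊆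
        ⋃ i, r i +ᵥ ((I i : Ideal R) : Set R) := by
  intro hcover
  obtain ⟨i, hfin⟩ := AddSubgroup.exists_finiteIndex_addSubgroupOf_of_vadd_subset_iUnion
    (B := (Ideal.span {b'}).toAddSubgroup) (H := fun i ↦ (I i).toAddSubgroup) hcover
  have hinf := hyp (I i) (hI i) b' hb'
  rw [AddSubgroup.inf_addSubgroupOf_left] at hinf
  exact not_finite_iff_infinite.mpr hinf inferInstance
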